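/- arXiv:2310.11705 — 4 statements merged into one kernel-verified Lean document; each statement's English description precedes it below -/
import Mathlib

section
/- Let F be a connected weighted graph with weight function w : E(F) → [0,∞). For x ≥ 0 let F^{≤x} denote the spanning subgraph of F consisting of the edges of weight at most x, and let cc(F^{≤x}) denote its number of connected components. Then MST(F) = ∫_0^∞ (cc(F^{≤x}) − 1) dx. -/
open MeasureTheory

/-- The weight of a minimum spanning tree of the graph `G` with edge weights `w`. -/
noncomputable def MSTweight {V : Type*} [Fintype V] (G : SimpleGraph V) (w : Sym2 V → ℝ) : ℝ :=
  sInf {x : ℝ | ∃ T : SimpleGraph V, T ≤ G ∧ T.IsTree ∧ x = ∑ᶠ e ∈ T.edgeSet, w e}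

/-- The spanning subgraph `F^{≤x}` of `F` consisting of the edges of weight at most `x`. -/
def levelGraph {V : Type*} (F : SimpleGraph V) (w : Sym2 V → ℝ) (x : ℝ) : SimpleGraph V where
  Adj a b := F.Adj a b ∧ w s(a, b) ≤ x
  symm := by
    constructor
    intro a b h
    exact ⟨h.1.symm, by rw [Sym2.eq_swap]; exact h.2⟩
  loopless := ⟨fun a h => F.loopless.irrefl a h.1⟩

/-!
Let `T` be a minimum spanning tree of `F`. By the exchange argument (cycle property), the
endpoints of every edge `ab` of `F` are joined in `T` by edges of weight at most `w(ab)`, so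
`T^{≤x}` and `F^{≤x}` have the same components for every `x`. As `T^{≤x}` is a forest,
`cc(T^{≤x}) = |V| - |E(T^{≤x})|`, so `cc(T^{≤x}) - 1` counts the edges of `T` of weight
greater than `x`; integrating over `x > 0` gives `∑_{e ∈ T} w(e)`.
-/

namespace SimpleGraph

variable {V : Type*} {G : SimpleGraph V} {u v a b : V}

lemma Reachable.of_sup_edge (h : (G ⊔ edge u v).Reachable a b) :
    G.Reachable a b ∨ (G.Reachable a u ∧ G.Reachable v b) ∨
      (G.Reachable a v ∧ G.Reachable u b) := by
  obtain ⟨p⟩ := h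
  induction p with
  | nil => exact .inl .rfl
  | @cons x y z hxy _ ih =>
    rcases hxy with hxy | hxy
    · rcases ih with h | h | h
      · exact .inl (hxy.reachable.trans h)
      · exact .inr (.inl ⟨hxy.reachable.trans h.1, h.2⟩)
      · exact .inr (.inr ⟨hxy.reachable.trans h.1, h.2⟩)
    · obtain ⟨⟨rfl, rfl⟩ | ⟨rfl, rfl⟩, -⟩ := (edge_adj ..).1 hxy
      · rcases ih with h | h | h
        · exact .inr (.inl ⟨.rfl, h⟩)
        · exact .inl (h.1.symm.trans h.2)
        · exact .inl h.2
      · rcases ih with h | h | h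
        · exact .inr (.inr ⟨.rfl, h⟩)
        · exact .inl h.2
        · exact .inl (h.1.symm.trans h.2)

lemma card_connectedComponent_sup_edge [Finite V] (h : ¬G.Reachable u v) :
    Nat.card (G ⊔ edge u v).ConnectedComponent + 1 = Nat.card G.ConnectedComponent := by
  let φ : {c : G.ConnectedComponent // c ≠ G.connectedComponentMk v} →
      (G ⊔ edge u v).ConnectedComponent := fun c => c.1.map (Hom.ofLE le_sup_left)
  have hφ : φ.Bijective := by
    refine ⟨fun ⟨c, hc⟩ ⟨d, hd⟩ hcd => Subtype.ext ?_, fun c => ?_⟩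
    · induction c, d using ConnectedComponent.ind₂ with
      | h a b =>
      rcases (ConnectedComponent.exact hcd).of_sup_edge with hab | hab | hab
      · exact ConnectedComponent.sound hab
      · exact absurd (ConnectedComponent.sound hab.2.symm) hd
      · exact absurd (ConnectedComponent.sound hab.1) hc
    · induction c using ConnectedComponent.ind with
      | h a =>
      by_cases ha : G.Reachable a v
      · have huv : (G ⊔ edge u v).Adj u v :=
          .inr ((edge_adj ..).2 ⟨.inl ⟨rfl, rfl⟩, fun huv => h (huv ▸ .rfl)⟩)
        refine ⟨⟨G.connectedComponentMk u, mt ConnectedComponent.exact h⟩, ?_⟩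
        exact ConnectedComponent.sound (huv.reachable.trans (ha.mono le_sup_left).symm)
      · exact ⟨⟨G.connectedComponentMk a, mt ConnectedComponent.exact ha⟩, rfl⟩
  classical
  rw [← Nat.card_eq_of_bijective φ hφ, ← Finite.card_option,
    Nat.card_congr (Equiv.optionSubtypeNe _)]

lemma deleteEdges_sup_edge (h : G.Adj u v) : G.deleteEdges {s(u, v)} ⊔ edge u v = G := by
  ext a b
  simp only [sup_adj, deleteEdges_adj, edge_adj, Set.mem_singleton_iff, Sym2.eq_iff]
  constructor
  · rintro (⟨hab, -⟩ | ⟨⟨rfl, rfl⟩ | ⟨rfl, rfl⟩, -⟩)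
    exacts [hab, h, h.symm]
  · intro hab
    by_cases he : a = u ∧ b = v ∨ a = v ∧ b = u
    · exact .inr ⟨he, hab.ne⟩
    · exact .inl ⟨hab, he⟩

lemma card_connectedComponent_bot [Finite V] :
    Nat.card (⊥ : SimpleGraph V).ConnectedComponent = Nat.card V :=
  (Nat.card_eq_of_bijective _ ⟨fun _ _ h => reachable_bot.1 (ConnectedComponent.exact h),
    fun c => c.ind fun v => ⟨v, rfl⟩⟩).symm

lemma IsAcyclic.card_connectedComponent_add_card_edgeSet [Finite V] (hG : G.IsAcyclic) :
    Nat.card G.ConnectedComponent + Nat.card G.edgeSet = Nat.card V := by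
  induction hn : Nat.card G.edgeSet generalizing G with
  | zero =>
    obtain rfl : G = ⊥ :=
      edgeSet_eq_empty.1 (Set.isEmpty_coe_sort.1 (Finite.card_eq_zero_iff.1 hn))
    exact card_connectedComponent_bot
  | succ n ih =>
    obtain ⟨e, he⟩ : G.edgeSet.Nonempty :=
      Set.nonempty_coe_sort.1 (Finite.card_pos_iff.1 (hn ▸ n.succ_pos))
    induction e using Sym2.ind with
    | h u v =>
    have hsep : ¬(G.deleteEdges {s(u, v)}).Reachable u v :=
      isAcyclic_iff_forall_adj_isBridge.1 hG he
    have hcard : Nat.card (G.deleteEdges {s(u, v)}).edgeSet = n := by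
      rw [edgeSet_deleteEdges, Nat.card_coe_set_eq, Set.ncard_sdiff_singleton_of_mem he,
        ← Nat.card_coe_set_eq, hn, Nat.add_sub_cancel]
    have := ih (hG.anti (deleteEdges_le _)) hcard
    rw [← card_connectedComponent_sup_edge hsep, deleteEdges_sup_edge he] at this
    omega

lemma IsAcyclic.isTree_of_card_edgeSet [Finite V] [Nonempty V] (hG : G.IsAcyclic)
    (h : Nat.card G.edgeSet + 1 = Nat.card V) : G.IsTree := by
  have hcc : Nat.card G.ConnectedComponent = 1 := by
    have := hG.card_connectedComponent_add_card_edgeSet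
    omega
  have := (Nat.card_eq_one_iff_unique.1 hcc).1
  exact ⟨⟨fun u v => ConnectedComponent.exact (Subsingleton.elim _ _)⟩, hG⟩

lemma IsAcyclic.not_reachable_deleteEdges_of_mem_edges (hG : G.IsAcyclic) {p : G.Walk a b}
    (hp : p.IsPath) {e : Sym2 V} (he : e ∈ p.edges) : ¬(G.deleteEdges {e}).Reachable a b := by
  classical
  rintro ⟨q⟩
  have hpq : p = q.bypass.mapLe (deleteEdges_le _) := congrArg Subtype.val <|
    (hG.subsingleton_path a b).elim ⟨p, hp⟩ ⟨_, q.bypass_isPath.mapLe _⟩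
  rw [hpq, Walk.edges_mapLe_eq_edges] at he
  simpa [edgeSet_deleteEdges] using q.bypass.edges_subset_edgeSet he

lemma card_connectedComponent_eq_of_le [Finite V] {H : SimpleGraph V} (hle : H ≤ G)
    (h : ∀ ⦃a b⦄, G.Adj a b → H.Reachable a b) :
    Nat.card H.ConnectedComponent = Nat.card G.ConnectedComponent := by
  have hreach : ∀ ⦃a b⦄, G.Reachable a b → H.Reachable a b := by
    rintro a b ⟨p⟩
    induction p with
    | nil => exact .rfl
    | cons hxy _ ih => exact (h hxy).trans ih
  refine Nat.card_eq_of_bijective _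
    ⟨fun c d hcd => ?_, ConnectedComponent.surjective_map_ofLE hle⟩
  induction c, d using ConnectedComponent.ind₂ with
  | h a b => exact ConnectedComponent.sound (hreach (ConnectedComponent.exact hcd))

section levelGraph

variable (G) (w : Sym2 V → ℝ) (x : ℝ)

lemma levelGraph_eq_deleteEdges : levelGraph G w x = G.deleteEdges {e | x < w e} := by
  ext a b
  simp [levelGraph]

lemma levelGraph_le : levelGraph G w x ≤ G := fun _ _ h => h.1

lemma levelGraph_monotone : Monotone (levelGraph G w) :=
  fun _ _ hxy _ _ hab => ⟨hab.1, hab.2.trans hxy⟩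

variable {G w x} in
lemma levelGraph_mono {H : SimpleGraph V} (h : H ≤ G) :
    levelGraph H w x ≤ levelGraph G w x :=
  fun _ _ hab => ⟨h hab.1, hab.2⟩

end levelGraph

structure IsMinSpanningTree (G : SimpleGraph V) (w : Sym2 V → ℝ) (T : SimpleGraph V) :
    Prop where
  le : T ≤ G
  isTree : T.IsTree
  weight_le : ∀ T' ≤ G, T'.IsTree → ∑ᶠ e ∈ T.edgeSet, w e ≤ ∑ᶠ e ∈ T'.edgeSet, w e

variable {w : Sym2 V → ℝ} {T : SimpleGraph V}

lemma Connected.exists_isMinSpanningTree [Finite V] (hG : G.Connected) (w : Sym2 V → ℝ) :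
    ∃ T, G.IsMinSpanningTree w T := by
  obtain ⟨T, ⟨hle, hT⟩, hmin⟩ := Set.exists_min_image {T | T ≤ G ∧ T.IsTree}
    (fun T => ∑ᶠ e ∈ T.edgeSet, w e) (Set.toFinite _) hG.exists_isTree_le
  exact ⟨T, hle, hT, fun T' hle' hT' => hmin T' ⟨hle', hT'⟩⟩

lemma IsMinSpanningTree.MSTweight_eq [Fintype V] (hT : G.IsMinSpanningTree w T) :
    MSTweight G w = ∑ᶠ e ∈ T.edgeSet, w e :=
  IsLeast.csInf_eq ⟨⟨T, hT.le, hT.isTree, rfl⟩,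
    by rintro _ ⟨T', hle, hT', rfl⟩; exact hT.weight_le T' hle hT'⟩

lemma IsMinSpanningTree.reachable_levelGraph [Finite V] (hT : G.IsMinSpanningTree w T)
    (hab : G.Adj a b) : (levelGraph T w (w s(a, b))).Reachable a b := by
  -- Otherwise an edge `f` of the `T`-path from `a` to `b` is heavier than `ab`, and
  -- `T - f + ab` is a lighter spanning tree.
  by_contra hsep
  obtain ⟨p, hp⟩ := (hT.isTree.connected.preconnected a b).exists_isPath
  rw [levelGraph_eq_deleteEdges] at hsep
  obtain ⟨f, hheavy, hfp⟩ := p.exists_mem_edges_of_not_reachable_deleteEdges hsep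
  have hfT : f ∈ T.edgeSet := p.edges_subset_edgeSet hfp
  have hcut := hT.isTree.isAcyclic.not_reachable_deleteEdges_of_mem_edges hp hfp
  have habT : s(a, b) ∉ T.edgeSet \ {f} := fun h =>
    hcut (Adj.reachable (by rwa [← mem_edgeSet, edgeSet_deleteEdges]))
  set T' := T.deleteEdges {f} ⊔ edge a b
  have hT'edges : T'.edgeSet = insert s(a, b) (T.edgeSet \ {f}) := by
    rw [edgeSet_sup, edgeSet_deleteEdges, edgeSet_edge_of_ne hab.ne, Set.union_singleton]
  have hT' : T'.IsTree := by
    have : Nonempty V := ⟨a⟩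
    refine ((hT.isTree.isAcyclic.anti (deleteEdges_le _)).sup_edge_of_not_reachable
      hcut).isTree_of_card_edgeSet ?_
    rw [Nat.card_coe_set_eq, hT'edges, Set.ncard_insert_of_notMem habT,
      Set.ncard_sdiff_singleton_add_one hfT, ← Nat.card_coe_set_eq]
    exact (isTree_iff_connected_and_card.1 hT.isTree).2
  have hweight := hT.weight_le T'
    (sup_le ((deleteEdges_le _).trans hT.le) ((edge_le_iff G).2 (.inr hab))) hT'
  have hsplit : ∑ᶠ e ∈ T.edgeSet, w e = w f + ∑ᶠ e ∈ T.edgeSet \ {f}, w e := by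
    conv_lhs => rw [← Set.insert_eq_of_mem hfT, ← Set.insert_sdiff_singleton]
    exact finsum_mem_insert _ (fun h => h.2 rfl) (Set.toFinite _)
  rw [hsplit, hT'edges, finsum_mem_insert _ habT (Set.toFinite _)] at hweight
  exact (show w s(a, b) < w f from hheavy).not_ge (by linarith)

lemma IsMinSpanningTree.card_connectedComponent_levelGraph [Finite V]
    (hT : G.IsMinSpanningTree w T) (x : ℝ) :
    Nat.card (levelGraph T w x).ConnectedComponent =
      Nat.card (levelGraph G w x).ConnectedComponent :=
  card_connectedComponent_eq_of_le (levelGraph_mono hT.le) fun _ _ hab =>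
    (hT.reachable_levelGraph hab.1).mono (levelGraph_monotone T w hab.2)

lemma IsTree.card_connectedComponent_levelGraph [Finite V] [Fintype T.edgeSet] (hT : T.IsTree)
    (w : Sym2 V → ℝ) (x : ℝ) :
    Nat.card (levelGraph T w x).ConnectedComponent =
      (T.edgeFinset.filter (x < w ·)).card + 1 := by
  have hforest :=
    (hT.isAcyclic.anti (levelGraph_le T w x)).card_connectedComponent_add_card_edgeSet
  have htree := (isTree_iff_connected_and_card.1 hT).2
  have hsplit := Set.ncard_inter_add_ncard_sdiff_eq_ncard T.edgeSet {e | x < w e}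
  rw [levelGraph_eq_deleteEdges, edgeSet_deleteEdges, Nat.card_coe_set_eq] at hforest
  rw [Nat.card_coe_set_eq] at htree
  rw [levelGraph_eq_deleteEdges, ← Set.ncard_coe_finset, Finset.coe_filter]
  simp only [mem_edgeFinset]
  change _ = (T.edgeSet ∩ {e | x < w e}).ncard + 1
  omega

end SimpleGraph

lemma integral_Ioi_indicator_Iio {a c : ℝ} (h : a ≤ c) :
    ∫ x in Set.Ioi a, (Set.Iio c).indicator (1 : ℝ → ℝ) x = c - a := by
  rw [integral_indicator_one measurableSet_Iio, measureReal_restrict_apply measurableSet_Iio,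
    Set.Iio_inter_Ioi, Real.volume_real_Ioo_of_le h]

lemma integrable_indicator_Iio (a c : ℝ) :
    Integrable ((Set.Iio c).indicator (1 : ℝ → ℝ)) (volume.restrict (Set.Ioi a)) := by
  refine (integrable_indicator_iff measurableSet_Iio).2 (integrableOn_const ?_)
  rw [Measure.restrict_apply measurableSet_Iio, Set.Iio_inter_Ioi]
  exact measure_Ioo_lt_top.ne

/-- For a connected weighted graph `F`, the weight of the minimum spanning tree equals
`∫_0^∞ (cc(F^{≤x}) − 1) dx`, where `cc(F^{≤x})` is the number of connected components of the
spanning subgraph consisting of the edges of weight at most `x`. -/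
theorem mst_eq_integral_of_component_counts {V : Type*} [Fintype V]
    (F : SimpleGraph V) (hconn : F.Connected)
    (w : Sym2 V → ℝ) (hw : ∀ e ∈ F.edgeSet, 0 ≤ w e) :
    MSTweight F w =
      ∫ x in Set.Ioi (0:ℝ),
        ((Nat.card (levelGraph F w x).ConnectedComponent : ℝ) - 1) := by
  classical
  obtain ⟨T, hT⟩ := hconn.exists_isMinSpanningTree w
  have hwT : ∀ e ∈ T.edgeFinset, 0 ≤ w e := fun e he =>
    hw e (SimpleGraph.edgeSet_mono hT.le (SimpleGraph.mem_edgeFinset.1 he))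
  have hintegrand : ∀ x, (Nat.card (levelGraph F w x).ConnectedComponent : ℝ) - 1 =
      ∑ e ∈ T.edgeFinset, (Set.Iio (w e)).indicator (1 : ℝ → ℝ) x := by
    intro x
    rw [← hT.card_connectedComponent_levelGraph, hT.isTree.card_connectedComponent_levelGraph,
      Finset.card_filter]
    push_cast
    simp [Set.indicator_apply]
  calc MSTweight F w = ∑ e ∈ T.edgeFinset, w e := by
        rw [hT.MSTweight_eq, finsum_mem_eq_toFinset_sum]; rfl
    _ = ∑ e ∈ T.edgeFinset, ∫ x in Set.Ioi 0, (Set.Iio (w e)).indicator (1 : ℝ → ℝ) x :=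
        Finset.sum_congr rfl fun e he => by rw [integral_Ioi_indicator_Iio (hwT e he), sub_zero]
    _ = ∫ x in Set.Ioi 0, ∑ e ∈ T.edgeFinset, (Set.Iio (w e)).indicator (1 : ℝ → ℝ) x :=
        (integral_finsetSum _ fun e _ => integrable_indicator_Iio 0 (w e)).symm
    _ = _ := by simp_rw [hintegrand]
end

section
/- For every α > 0 the following holds. Let H be an α-robust graph on n ≥ 2 vertices with 10·log(n)/(α·n) ≤ 1, and let F be the random subgraph of H in which each edge of H is included independently with probability 10·log(n)/(α·n). Then with probability at least 1 − 2n^{−3}, the graph F is connected. -/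
open MeasureTheory

/-- The Bernoulli measure on `Bool` with success probability `p` (for `p ∈ [0,1]`). -/
noncomputable def bernoulliMeasure (p : ℝ) : Measure Bool :=
  (ENNReal.ofReal p) • Measure.dirac true + (1 - ENNReal.ofReal p) • Measure.dirac false

/-- The crossing edges of `G` between `U` and its complement, recorded as ordered pairs with
first coordinate in `U`; each crossing edge corresponds to exactly one such pair. -/
def crossPairs {V : Type*} (G : SimpleGraph V) (U : Set V) : Set (V × V) :=
  {p : V × V | p.1 ∈ U ∧ p.2 ∉ U ∧ G.Adj p.1 p.2}

/-- An `n`-vertex graph `G` is `ρ`-robust if for every `U ⊆ V(G)` the number of edges of `G`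
between `U` and its complement is at least `ρ·|U|·(n−|U|)`. -/
def IsRobust {V : Type*} [Fintype V] (ρ : ℝ) (G : SimpleGraph V) : Prop :=
  ∀ U : Set V,
    ρ * (Nat.card U : ℝ) * ((Fintype.card V : ℝ) - (Nat.card U : ℝ))
      ≤ (Nat.card (crossPairs G U) : ℝ)

/-- The graph on `V` whose edges are the elements of `S` selected by `ω`. -/
def selectGraph {V : Type*} (S : Set (Sym2 V)) (ω : Sym2 V → Bool) : SimpleGraph V where
  Adj a b := a ≠ b ∧ s(a, b) ∈ S ∧ ω s(a, b) = true
  symm := by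
    constructor
    intro a b h
    refine ⟨h.1.symm, ?_, ?_⟩ <;> rw [Sym2.eq_swap]
    exacts [h.2.1, h.2.2]
  loopless := ⟨fun a h => h.1 rfl⟩

/-!
If `F` is disconnected, then some proper nonempty `U ⊆ V` has none of its `H`-crossing edges in
`F`. For `|U| = k` robustness gives at least `α k (n - k) ≥ α n min(k, n - k) / 2` such edges,
so with `p = 10 log n / (α n)` this has probability at most
`(1 - p) ^ (α k (n - k)) ≤ exp (-p α k (n - k)) ≤ n ^ (-5 min(k, n - k))`. As there are
`n.choose k ≤ n ^ min(k, n - k)` sets of size `k`, the union bound over all `k ≤ n` gives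
`(n + 1) n⁻⁴ ≤ 2 n⁻³`.
-/

open Finset

lemma bernoulliMeasure_singleton_false {p : ℝ} (hp : 0 ≤ p) :
    bernoulliMeasure p {false} = ENNReal.ofReal (1 - p) := by
  simp [bernoulliMeasure, ENNReal.ofReal_sub 1 hp]

lemma isProbabilityMeasure_bernoulliMeasure {p : ℝ} (hp : p ≤ 1) :
    IsProbabilityMeasure (bernoulliMeasure p) :=
  ⟨by simp [bernoulliMeasure, add_tsub_cancel_of_le (ENNReal.ofReal_le_one.2 hp)]⟩

lemma MeasureTheory.one_sub_le_prob_of_prob_compl_le {Ω : Type*} [MeasurableSpace Ω]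
    {μ : Measure Ω} [IsProbabilityMeasure μ] {s : Set Ω} {ε : ENNReal} (h : μ sᶜ ≤ ε) :
    1 - ε ≤ μ s := by
  rw [tsub_le_iff_right, ← measure_univ (μ := μ), ← Set.union_compl_self s]
  exact (measure_union_le s sᶜ).trans (by gcongr)

lemma isProbabilityMeasure_ite_bernoulliMeasure (P : Prop) [Decidable P] {p : ℝ} (hp : p ≤ 1) :
    IsProbabilityMeasure (if P then bernoulliMeasure p else Measure.dirac false) := by
  split_ifs
  · exact isProbabilityMeasure_bernoulliMeasure hp
  · infer_instance

section BondPercolation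

variable {V : Type*} [Fintype V]

open Classical

noncomputable def bondPercolation (H : SimpleGraph V) (p : ℝ) : Measure (Sym2 V → Bool) :=
  Measure.pi fun e => if e ∈ H.edgeSet then bernoulliMeasure p else Measure.dirac false

lemma isProbabilityMeasure_bondPercolation (H : SimpleGraph V) {p : ℝ} (hp : p ≤ 1) :
    IsProbabilityMeasure (bondPercolation H p) :=
  have := fun e : Sym2 V => isProbabilityMeasure_ite_bernoulliMeasure (e ∈ H.edgeSet) hp
  Measure.pi.instIsProbabilityMeasure _

lemma bondPercolation_forall_eq_false {H : SimpleGraph V} {p : ℝ} (hp₀ : 0 ≤ p)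
    (hp₁ : p ≤ 1) {T : Finset (Sym2 V)} (hT : ∀ e ∈ T, e ∈ H.edgeSet) :
    bondPercolation H p {ω | ∀ e ∈ T, ω e = false} = ENNReal.ofReal ((1 - p) ^ #T) := by
  have := fun e : Sym2 V => isProbabilityMeasure_ite_bernoulliMeasure (e ∈ H.edgeSet) hp₁
  have hset : {ω : Sym2 V → Bool | ∀ e ∈ T, ω e = false} =
      (T : Set (Sym2 V)).pi fun _ => {false} := by
    ext ω
    simp
  rw [bondPercolation, hset, Measure.pi_pi_finset,
    prod_congr rfl fun e he => by rw [if_pos (hT e he), bernoulliMeasure_singleton_false hp₀],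
    prod_const, ENNReal.ofReal_pow (by linarith)]

end BondPercolation

lemma SimpleGraph.exists_isolated_finset_of_not_connected {V : Type*} [Fintype V] [Nonempty V]
    {G : SimpleGraph V} (h : ¬G.Connected) :
    ∃ U : Finset V, U.Nonempty ∧ U ≠ univ ∧ ∀ a ∈ U, ∀ b ∉ U, ¬G.Adj a b := by
  classical
  obtain ⟨a, b, hab⟩ : ∃ a b, ¬G.Reachable a b := by
    by_contra! hall
    exact h ⟨hall⟩
  refine ⟨univ.filter (G.Reachable a), ⟨a, by simp⟩, fun hU => hab ?_,
    fun x hx y hy hxy => hy ?_⟩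
  · simpa using eq_univ_iff_forall.1 hU b
  · simp only [mem_filter, mem_univ, true_and] at hx ⊢
    exact hx.trans hxy.reachable

section CutEdges

variable {V : Type*} [Fintype V]

open Classical in
noncomputable def cutEdgeFinset (G : SimpleGraph V) (U : Finset V) : Finset (Sym2 V) :=
  (Set.toFinite (crossPairs G U)).toFinset.image fun q => s(q.1, q.2)

lemma mem_cutEdgeFinset {G : SimpleGraph V} {U : Finset V} {e : Sym2 V} :
    e ∈ cutEdgeFinset G U ↔ ∃ a ∈ U, ∃ b ∉ U, G.Adj a b ∧ s(a, b) = e := by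
  simp [cutEdgeFinset, crossPairs, and_assoc]

lemma card_cutEdgeFinset (G : SimpleGraph V) (U : Finset V) :
    #(cutEdgeFinset G U) = Nat.card (crossPairs G U) := by
  classical
  rw [cutEdgeFinset, card_image_of_injOn, Nat.card_coe_set_eq, Set.ncard_eq_toFinset_card]
  rintro ⟨a, b⟩ hab ⟨c, d⟩ hcd h
  simp only [Set.Finite.coe_toFinset, crossPairs, Set.mem_ofPred_eq] at hab hcd
  rcases Sym2.eq_iff.1 h with ⟨rfl, rfl⟩ | ⟨rfl, rfl⟩
  · rfl
  · exact absurd hab.1 hcd.2.1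

lemma setOf_connected_compl_subset [Nonempty V] (H : SimpleGraph V) :
    {ω | (selectGraph H.edgeSet ω).Connected}ᶜ ⊆
      ⋃ U ∈ univ.filter (fun U : Finset V => 0 < #U ∧ #U < Fintype.card V),
        {ω | ∀ e ∈ cutEdgeFinset H U, ω e = false} := by
  intro ω hω
  obtain ⟨U, hU, hUV, hcut⟩ := SimpleGraph.exists_isolated_finset_of_not_connected hω
  simp only [Set.mem_iUnion, mem_filter, mem_univ, true_and, Set.mem_ofPred_eq]
  refine ⟨U, ⟨card_pos.2 hU, (card_lt_iff_ne_univ U).2 hUV⟩, fun e he => ?_⟩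
  obtain ⟨a, ha, b, hb, hab, rfl⟩ := mem_cutEdgeFinset.1 he
  by_contra hω
  exact hcut a ha b hb ⟨hab.ne, hab, by simpa using hω⟩

end CutEdges

lemma bondPercolation_connected_compl_le {V : Type*} [Fintype V] [Nonempty V]
    (H : SimpleGraph V) {p : ℝ} (hp₀ : 0 ≤ p) (hp₁ : p ≤ 1) :
    bondPercolation H p {ω | (selectGraph H.edgeSet ω).Connected}ᶜ ≤
      ∑ U ∈ univ.filter (fun U : Finset V => 0 < #U ∧ #U < Fintype.card V),
        ENNReal.ofReal ((1 - p) ^ Nat.card (crossPairs H U)) := by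
  refine (measure_mono (setOf_connected_compl_subset H)).trans <|
    (measure_biUnion_finset_le _ _).trans <| sum_le_sum fun U _ => le_of_eq ?_
  rw [bondPercolation_forall_eq_false hp₀ hp₁, card_cutEdgeFinset]
  intro e he
  obtain ⟨a, -, b, -, hab, rfl⟩ := mem_cutEdgeFinset.1 he
  exact hab

lemma one_sub_pow_le_exp_neg_mul {p : ℝ} (hp : p ≤ 1) (c : ℕ) :
    (1 - p) ^ c ≤ Real.exp (-(c * p)) :=
  calc (1 - p) ^ c ≤ Real.exp (-p) ^ c :=
        pow_le_pow_left₀ (by linarith) (Real.one_sub_le_exp_neg p) c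
    _ = Real.exp (-(c * p)) := by rw [← Real.exp_nat_mul]; ring_nf

lemma min_mul_le_two_mul_mul_sub {n k : ℕ} (hk : k ≤ n) :
    (min k (n - k) : ℕ) * (n : ℝ) ≤ 2 * (k * (n - k)) := by
  have hk' : (k : ℝ) ≤ n := by exact_mod_cast hk
  rcases le_total k (n - k) with h | h
  · have h' := (Nat.cast_le (α := ℝ)).2 h
    rw [Nat.cast_sub hk] at h'
    rw [min_eq_left h]
    nlinarith
  · have h' := (Nat.cast_le (α := ℝ)).2 h
    rw [Nat.cast_sub hk] at h'
    rw [min_eq_right h, Nat.cast_sub hk]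
    nlinarith

lemma one_sub_pow_le_inv_pow_min {α : ℝ} {n k c : ℕ} (hα : 0 < α) (hn : 0 < n) (hk : k ≤ n)
    (hp : 10 * Real.log n / (α * n) ≤ 1) (hc : α * k * (n - k) ≤ c) :
    (1 - 10 * Real.log n / (α * n)) ^ c ≤ ((n : ℝ) ^ (5 * min k (n - k)))⁻¹ := by
  set p := 10 * Real.log n / (α * n)
  set m := min k (n - k)
  have hn' : (0 : ℝ) < n := by exact_mod_cast hn
  have hp₀ : 0 ≤ p := by have := Real.log_natCast_nonneg n; positivity
  have hexponent : (5 * m : ℕ) * Real.log n ≤ c * p :=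
    calc (5 * m : ℕ) * Real.log n = α * (m * n / 2) * p := by
          simp only [p]; push_cast; field_simp; ring
      _ ≤ α * (k * (n - k)) * p := by gcongr; linarith [min_mul_le_two_mul_mul_sub hk]
      _ ≤ c * p := by rw [← mul_assoc]; gcongr
  calc (1 - p) ^ c ≤ Real.exp (-(c * p)) := one_sub_pow_le_exp_neg_mul hp c
    _ ≤ Real.exp (-((5 * m : ℕ) * Real.log n)) := by gcongr
    _ = ((n : ℝ) ^ (5 * m))⁻¹ := by rw [Real.exp_neg, Real.exp_nat_mul, Real.exp_log hn']

lemma choose_le_pow_min (n k : ℕ) (hk : k ≤ n) : n.choose k ≤ n ^ min k (n - k) := by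
  rcases le_total k (n - k) with h | h
  · rw [min_eq_left h]
    exact Nat.choose_le_pow n k
  · rw [min_eq_right h, ← Nat.choose_symm hk]
    exact Nat.choose_le_pow n (n - k)

lemma choose_mul_inv_pow_le {n k : ℕ} (hk₀ : 0 < k) (hkn : k < n) :
    (n.choose k : ℝ) * ((n : ℝ) ^ (5 * min k (n - k)))⁻¹ ≤ ((n : ℝ) ^ 4)⁻¹ := by
  have hm : 1 ≤ min k (n - k) := le_min hk₀ (by omega)
  set m := min k (n - k)
  have hn : (1 : ℝ) ≤ n := by exact_mod_cast (by omega : 1 ≤ n)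
  calc (n.choose k : ℝ) * ((n : ℝ) ^ (5 * m))⁻¹
      ≤ (n : ℝ) ^ m * ((n : ℝ) ^ (5 * m))⁻¹ := by
        gcongr
        exact_mod_cast choose_le_pow_min n k hkn.le
    _ = ((n : ℝ) ^ (4 * m))⁻¹ := by
        rw [show 5 * m = m + 4 * m by ring, pow_add, mul_inv, ← mul_assoc,
          mul_inv_cancel₀ (by positivity), one_mul]
    _ ≤ ((n : ℝ) ^ 4)⁻¹ := inv_anti₀ (by positivity) (pow_le_pow_right₀ hn (by omega))

lemma sum_inv_pow_min_card_le {V : Type*} [Fintype V] (hV : 0 < Fintype.card V) :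
    ∑ U ∈ univ.filter (fun U : Finset V => 0 < #U ∧ #U < Fintype.card V),
      ((Fintype.card V : ℝ) ^ (5 * min #U (Fintype.card V - #U)))⁻¹ ≤
        2 / (Fintype.card V : ℝ) ^ 3 := by
  set n := Fintype.card V
  have hn : (1 : ℝ) ≤ n := by exact_mod_cast hV
  calc _ = ∑ k ∈ range (n + 1),
        n.choose k • if 0 < k ∧ k < n then ((n : ℝ) ^ (5 * min k (n - k)))⁻¹ else 0 := by
        rw [sum_filter, ← powerset_univ]
        exact sum_powerset_apply_card fun k =>
          if 0 < k ∧ k < n then ((n : ℝ) ^ (5 * min k (n - k)))⁻¹ else 0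
    _ ≤ ∑ k ∈ range (n + 1), ((n : ℝ) ^ 4)⁻¹ := by
        gcongr with k
        rw [nsmul_eq_mul]
        split_ifs with hk
        · exact choose_mul_inv_pow_le hk.1 hk.2
        · simp only [mul_zero]; positivity
    _ = (n + 1) / (n : ℝ) ^ 4 := by simp [div_eq_mul_inv]
    _ ≤ 2 / (n : ℝ) ^ 3 := by
        rw [div_le_div_iff₀ (by positivity) (by positivity)]
        nlinarith [pow_nonneg (by positivity : (0 : ℝ) ≤ n) 3]

open Classical in
theorem random_subgraph_of_robust_connected_general {V : Type*} [Fintype V]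
    (α : ℝ) (hα : 0 < α) (H : SimpleGraph V) (hn : 2 ≤ Fintype.card V)
    (hrob : IsRobust α H)
    (hp : 10 * Real.log (Fintype.card V) / (α * (Fintype.card V : ℝ)) ≤ 1) :
    1 - 2 / (Fintype.card V : ENNReal) ^ 3 ≤
      (Measure.pi (fun e : Sym2 V =>
          if e ∈ H.edgeSet
          then bernoulliMeasure (10 * Real.log (Fintype.card V) / (α * (Fintype.card V : ℝ)))
          else Measure.dirac false))
        {ω : Sym2 V → Bool | (selectGraph H.edgeSet ω).Connected} := by
  set n := Fintype.card V
  set p := 10 * Real.log n / (α * n)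
  have : Nonempty V := Fintype.card_pos_iff.1 (by omega)
  have := isProbabilityMeasure_bondPercolation H hp
  have hp₀ : 0 ≤ p := by have := Real.log_natCast_nonneg n; positivity
  refine one_sub_le_prob_of_prob_compl_le (μ := bondPercolation H p) ?_
  calc bondPercolation H p {ω | (selectGraph H.edgeSet ω).Connected}ᶜ
      ≤ ∑ U ∈ univ.filter (fun U : Finset V => 0 < #U ∧ #U < n),
          ENNReal.ofReal ((1 - p) ^ Nat.card (crossPairs H U)) :=
        bondPercolation_connected_compl_le H hp₀ hp
    _ ≤ ∑ U ∈ univ.filter (fun U : Finset V => 0 < #U ∧ #U < n),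
          ENNReal.ofReal ((n : ℝ) ^ (5 * min #U (n - #U)))⁻¹ := by
        gcongr with U
        exact one_sub_pow_le_inv_pow_min hα (by omega) (card_le_univ U) hp (by simpa using hrob U)
    _ = ENNReal.ofReal (∑ U ∈ univ.filter (fun U : Finset V => 0 < #U ∧ #U < n),
          ((n : ℝ) ^ (5 * min #U (n - #U)))⁻¹) :=
        (ENNReal.ofReal_sum_of_nonneg fun U _ => by positivity).symm
    _ ≤ ENNReal.ofReal (2 / (n : ℝ) ^ 3) :=
        ENNReal.ofReal_le_ofReal (sum_inv_pow_min_card_le (by omega))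
    _ = 2 / (n : ENNReal) ^ 3 := by
        rw [ENNReal.ofReal_div_of_pos (by positivity), ENNReal.ofReal_pow (by positivity),
          ENNReal.ofReal_natCast, ENNReal.ofReal_ofNat]

open Classical in
/-- A random subgraph of an `α`-robust graph `H` on `n ≥ 2` vertices, keeping each edge
independently with probability `10·log n/(α·n) (≤ 1)`, is connected with probability at
least `1 − 2n⁻³`. -/
theorem random_subgraph_of_robust_connected {V : Type*} [Fintype V] [DecidableEq V]
    (α : ℝ) (hα : 0 < α) (H : SimpleGraph V) (hn : 2 ≤ Fintype.card V)
    (hrob : IsRobust α H)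
    (hp : 10 * Real.log (Fintype.card V) / (α * (Fintype.card V : ℝ)) ≤ 1) :
    1 - 2 / (Fintype.card V : ENNReal) ^ 3 ≤
      (Measure.pi (fun e : Sym2 V =>
          if e ∈ H.edgeSet
          then bernoulliMeasure (10 * Real.log (Fintype.card V) / (α * (Fintype.card V : ℝ)))
          else Measure.dirac false))
        {ω : Sym2 V → Bool | (selectGraph H.edgeSet ω).Connected} :=
  random_subgraph_of_robust_connected_general α hα H hn hrob hp
end

section
/- Let α > 0 and n ≥ 2 with 12/(αn) ≤ 1. Let G⃗ be an (α/3)-orbust oriented graph on a vertex set V with |V| = n, and let C be a nonempty proper subset of V. Include each oriented edge of G⃗ independently with probability 12/(αn). Then the probability that no included oriented edge goes from C to V∖C is at most 1/5. -/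
open MeasureTheory

open Classical in
/-- Let `G⃗` be an `(α/3)`-orbust oriented graph on `n` vertices (given by an irreflexive,
antisymmetric relation `o`), with `12/(αn) ≤ 1`, and let `C` be a nonempty proper subset of
the vertices.  If each oriented edge is included independently with probability `12/(αn)`,
then the probability that no included oriented edge goes from `C` to its complement is at
most `1/5`. -/
theorem prob_component_weakly_untouched {V : Type*} [Fintype V] [DecidableEq V]
    (α : ℝ) (hα : 0 < α) (hn : 2 ≤ Fintype.card V)
    (hp : 12 / (α * (Fintype.card V : ℝ)) ≤ 1)
    (o : V → V → Prop)
    (hirr : ∀ a : V, ¬ o a a)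
    (hanti : ∀ a b : V, o a b → ¬ o b a)
    (horb : ∀ U : Set V,
      α / 3 * (Nat.card U : ℝ) * ((Fintype.card V : ℝ) - (Nat.card U : ℝ))
        ≤ (Nat.card {p : V × V | p.1 ∈ U ∧ p.2 ∉ U ∧ o p.1 p.2} : ℝ))
    (C : Set V) (hC : C.Nonempty) (hCproper : C ≠ Set.univ) :
    (Measure.pi (fun p : V × V =>
        if o p.1 p.2 then bernoulliMeasure (12 / (α * (Fintype.card V : ℝ)))
        else Measure.dirac false))
      {ω : V × V → Bool |
        ∀ p : V × V, o p.1 p.2 → p.1 ∈ C → p.2 ∉ C → ω p = false}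
      ≤ 1 / 5 := by
  set n := Fintype.card V with hndef
  set p : ℝ := 12 / (α * n) with hpdef
  have hn0 : (0:ℝ) < n := by
    have : 0 < n := by omega
    exact_mod_cast this
  have hA : (0:ℝ) < α * n := by positivity
  have hp0 : 0 < p := by positivity
  have hople : ENNReal.ofReal p ≤ 1 := by
    rw [← ENNReal.ofReal_one]; exact ENNReal.ofReal_le_ofReal hp
  have hbern_univ : bernoulliMeasure p Set.univ = 1 := by
    simp [bernoulliMeasure]
    exact add_tsub_cancel_of_le hople
  have hbern_false : bernoulliMeasure p {false} = 1 - ENNReal.ofReal p := by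
    simp [bernoulliMeasure, Measure.dirac_apply]
  haveI hinst : ∀ q : V × V,
      IsProbabilityMeasure (if o q.1 q.2 then bernoulliMeasure p else Measure.dirac false) := by
    intro q
    split_ifs
    · exact ⟨hbern_univ⟩
    · infer_instance
  set pred : V × V → Prop := fun q => q.1 ∈ C ∧ q.2 ∉ C ∧ o q.1 q.2 with hpreddef
  have hE : {ω : V × V → Bool | ∀ q : V × V, o q.1 q.2 → q.1 ∈ C → q.2 ∉ C → ω q = false}
      = Set.pi Set.univ (fun q => if pred q then ({false} : Set Bool) else Set.univ) := by
    ext ω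
    simp only [Set.mem_setOf_eq, Set.mem_pi, Set.mem_univ, forall_true_left]
    constructor
    · intro h q
      by_cases hq : pred q
      · rw [if_pos hq]; exact h q hq.2.2 hq.1 hq.2.1
      · rw [if_neg hq]; trivial
    · intro h q ho h1 h2
      have := h q
      rw [if_pos ⟨h1, h2, ho⟩] at this
      exact this
  rw [hE, Measure.pi_pi]
  have hfactor : ∀ q : V × V,
      (if o q.1 q.2 then bernoulliMeasure p else Measure.dirac false)
        (if pred q then ({false} : Set Bool) else Set.univ)
      = if pred q then (1 - ENNReal.ofReal p) else 1 := by
    intro q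
    by_cases hq : pred q
    · rw [if_pos hq, if_pos hq, if_pos hq.2.2, hbern_false]
    · rw [if_neg hq, if_neg hq]
      split_ifs
      · exact hbern_univ
      · simp
  simp only [hfactor]
  rw [← Finset.prod_filter, Finset.prod_const]
  set m : ℕ := (Finset.univ.filter pred).card with hmdef
  -- cardinality identification
  have hmcard : (Nat.card {q : V × V | q.1 ∈ C ∧ q.2 ∉ C ∧ o q.1 q.2} : ℝ) = (m : ℝ) := by
    congr 1
    rw [Nat.card_eq_fintype_card, hmdef]
    simp only [hpreddef]
    exact Fintype.card_subtype _
  -- cardinality of C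
  have hk1 : 1 ≤ (Nat.card C : ℝ) := by
    have : 0 < Nat.card C := by
      haveI := hC.to_subtype
      exact Nat.card_pos
    exact_mod_cast this
  have hk2 : (Nat.card C : ℝ) ≤ (n : ℝ) - 1 := by
    have h1 : Nat.card C = C.ncard := Nat.card_coe_set_eq C
    have h2 : C.ncard < n := by
      have := Set.ncard_lt_ncard (Set.ssubset_univ_iff.mpr hCproper) Set.finite_univ
      rwa [Set.ncard_univ, Nat.card_eq_fintype_card] at this
    have h3 : Nat.card C + 1 ≤ n := by omega
    have := (Nat.cast_le (α := ℝ)).mpr h3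
    push_cast at this
    linarith
  -- lower bound on m
  have hmlb : α * n / 6 ≤ (m : ℝ) := by
    have h := horb C
    rw [hmcard] at h
    set k : ℝ := (Nat.card C : ℝ)
    have hkk : (n : ℝ) - 1 ≤ k * ((n:ℝ) - k) := by nlinarith
    have hn2 : (n:ℝ) / 2 ≤ (n:ℝ) - 1 := by
      have : (2:ℝ) ≤ n := by exact_mod_cast hn
      linarith
    nlinarith
  -- p * m ≥ 2
  have hpm : 2 ≤ p * m := by
    rw [hpdef, div_mul_eq_mul_div, le_div_iff₀ hA]
    nlinarith
  -- real-valued bound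
  have hreal : (1 - p) ^ m ≤ 1 / 5 := by
    have h1p : 0 ≤ 1 - p := by linarith
    have hexp : 1 - p ≤ Real.exp (-p) := by
      have := Real.add_one_le_exp (-p)
      linarith
    calc (1 - p) ^ m ≤ Real.exp (-p) ^ m := pow_le_pow_left₀ h1p hexp m
      _ = Real.exp ((m : ℝ) * (-p)) := by rw [Real.exp_nat_mul]
      _ ≤ Real.exp (-2) := by
          apply Real.exp_le_exp.mpr
          nlinarith
      _ ≤ 1 / 5 := by
          rw [Real.exp_neg]
          have he1 : (2.7182818283 : ℝ) < Real.exp 1 := Real.exp_one_gt_d9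
          have he2 : Real.exp 2 = Real.exp 1 * Real.exp 1 := by
            rw [← Real.exp_add]; norm_num
          have h5 : (5:ℝ) ≤ Real.exp 2 := by nlinarith
          rw [show (1:ℝ)/5 = ((5:ℝ))⁻¹ by norm_num]
          exact inv_anti₀ (by norm_num) h5
  -- convert to ENNReal
  have h1 : (1 : ENNReal) - ENNReal.ofReal p = ENNReal.ofReal (1 - p) := by
    rw [ENNReal.ofReal_sub _ hp0.le, ENNReal.ofReal_one]
  have h5e : (1 : ENNReal) / 5 = ENNReal.ofReal (1/5) := by
    rw [ENNReal.ofReal_div_of_pos (by norm_num), ENNReal.ofReal_one]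
    norm_num
  rw [h1, ← ENNReal.ofReal_pow (by linarith), h5e]
  exact ENNReal.ofReal_le_ofReal hreal
end

section
/- Let F and F' be graphs on the same finite vertex set V with E(F) ⊆ E(F'). Call a connected component C of F untouched if the vertex set of C is also the vertex set of a connected component of F', and let r be the number of untouched components of F. Then cc(F') ≤ r + (cc(F) − r)/2; equivalently, cc(F') ≤ (cc(F) + r)/2. -/
open SimpleGraph Finset

/-- Let `F ≤ F'` be graphs on the same finite vertex set.  A component `C` of `F` is
*untouched* if its vertex set is also the vertex set of a component of `F'`; if `r` is the
number of untouched components, then `cc(F') ≤ r + (cc(F) − r)/2`. -/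
theorem cc_le_untouched_bound {V : Type*} [Fintype V]
    (F F' : SimpleGraph V) (h : F ≤ F') :
    (Nat.card F'.ConnectedComponent : ℝ) ≤
      (Nat.card {C : F.ConnectedComponent |
          ∃ C' : F'.ConnectedComponent, C.supp = C'.supp} : ℝ)
      + ((Nat.card F.ConnectedComponent : ℝ)
          - (Nat.card {C : F.ConnectedComponent |
              ∃ C' : F'.ConnectedComponent, C.supp = C'.supp} : ℝ)) / 2 := by
  classical
  set π : F.ConnectedComponent → F'.ConnectedComponent :=
    fun C => C.map (SimpleGraph.Hom.ofLE h) with hπ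
  have hmk : ∀ v : V, π (F.connectedComponentMk v) = F'.connectedComponentMk v :=
    fun v => rfl
  have hsurj : Function.Surjective π := by
    intro C'
    refine C'.ind fun v => ⟨F.connectedComponentMk v, rfl⟩
  have hsupp : ∀ C : F.ConnectedComponent, C.supp ⊆ (π C).supp := by
    intro C v hv
    rw [SimpleGraph.ConnectedComponent.mem_supp_iff] at hv ⊢
    rw [← hv]
    rfl
  -- key equivalence: untouched ↔ fiber is a singleton
  have key : ∀ C : F.ConnectedComponent,
      (∃ C' : F'.ConnectedComponent, C.supp = C'.supp) ↔
      (∀ D, π D = π C → D = C) := by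
    intro C
    constructor
    · rintro ⟨C', hC'⟩ D hD
      -- first: π C = C'
      have hCne : C.supp.Nonempty := C.ind fun v => ⟨v, rfl⟩
      obtain ⟨v, hv⟩ := hCne
      have hv' : v ∈ C'.supp := hC' ▸ hv
      have hπC : π C = C' := by
        rw [SimpleGraph.ConnectedComponent.mem_supp_iff] at hv hv'
        rw [← hv, hmk, hv']
      obtain ⟨w, hw⟩ : D.supp.Nonempty := D.ind fun v => ⟨v, rfl⟩
      have hw' : w ∈ C.supp := by
        have : w ∈ (π D).supp := hsupp D hw
        rw [hD, hπC, ← hC'] at this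
        exact this
      rw [SimpleGraph.ConnectedComponent.mem_supp_iff] at hw hw'
      rw [← hw, hw']
    · intro hfib
      refine ⟨π C, Set.Subset.antisymm (hsupp C) ?_⟩
      intro v hv
      rw [SimpleGraph.ConnectedComponent.mem_supp_iff] at hv ⊢
      have : π (F.connectedComponentMk v) = π C := by rw [hmk, hv]
      exact hfib _ this
  -- counting
  haveI : Fintype F.ConnectedComponent := Fintype.ofFinite _
  haveI : Fintype F'.ConnectedComponent := Fintype.ofFinite _
  set P : F.ConnectedComponent → Prop := fun C => ∀ D, π D = π C → D = C with hP
  set n : ℕ := Fintype.card F.ConnectedComponent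
  set n' : ℕ := Fintype.card F'.ConnectedComponent
  set r : ℕ := (univ.filter P).card with hr
  -- r equals the number of singleton fibers
  have hrcard : r = (univ.filter
      (fun C' : F'.ConnectedComponent =>
        (univ.filter (fun C => π C = C')).card = 1)).card := by
    refine Finset.card_bij (fun C _ => π C) ?_ ?_ ?_
    · intro C hC
      simp only [mem_filter, mem_univ, true_and] at hC ⊢
      rw [Finset.card_eq_one]
      refine ⟨C, ?_⟩
      ext D
      simp only [mem_filter, mem_univ, true_and, mem_singleton]
      constructor
      · exact fun hd => hC D hd
      · rintro rfl; rfl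
    · intro C hC D hD hCD
      simp only [mem_filter, mem_univ, true_and] at hC hD
      exact hD C hCD
    · intro C' hC'
      simp only [mem_filter, mem_univ, true_and, Finset.card_eq_one] at hC'
      obtain ⟨C, hC⟩ := hC'
      have hπC : π C = C' := by
        have : C ∈ univ.filter (fun C => π C = C') := hC ▸ mem_singleton_self C
        simpa using this
      refine ⟨C, ?_, hπC⟩
      simp only [mem_filter, mem_univ, true_and]
      intro D hD
      have : D ∈ univ.filter (fun C => π C = C') := by simpa [hπC] using hD
      rw [hC] at this
      simpa using this
  -- fibers partition
  have hncard : n = ∑ C' : F'.ConnectedComponent,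
      (univ.filter (fun C => π C = C')).card :=
    Finset.card_eq_sum_card_fiberwise (fun C _ => mem_univ (π C))
  -- every fiber nonempty
  have hfibpos : ∀ C' : F'.ConnectedComponent,
      1 ≤ (univ.filter (fun C => π C = C')).card := by
    intro C'
    obtain ⟨C, hC⟩ := hsurj C'
    exact Finset.card_pos.mpr ⟨C, by simp [hC]⟩
  -- main nat inequality : 2 * n' ≤ n + r
  have hmain : 2 * n' ≤ n + r := by
    rw [hncard, hrcard, Finset.card_filter, ← Finset.sum_add_distrib]
    have h2 : 2 * n' = ∑ _C' : F'.ConnectedComponent, 2 := by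
      simp [n', mul_comm]
    rw [h2]
    refine Finset.sum_le_sum fun C' _ => ?_
    have hp := hfibpos C'
    by_cases hc : (univ.filter (fun C => π C = C')).card = 1
    · simp [hc]
    · simp only [hc, if_false]
      omega
  -- translate to the goal
  have hS : Nat.card {C : F.ConnectedComponent |
      ∃ C' : F'.ConnectedComponent, C.supp = C'.supp} = r := by
    have he : {C : F.ConnectedComponent |
        ∃ C' : F'.ConnectedComponent, C.supp = C'.supp} = {C | P C} :=
      Set.ext fun C => key C
    rw [he, hr]
    simp only [Set.coe_setOf]
    rw [Nat.card_eq_fintype_card, Fintype.card_subtype]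
  have hn : Nat.card F.ConnectedComponent = n := Nat.card_eq_fintype_card
  have hn' : Nat.card F'.ConnectedComponent = n' := Nat.card_eq_fintype_card
  rw [hS, hn, hn']
  have : (2 : ℝ) * n' ≤ n + r := by exact_mod_cast hmain
  linarith
end
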